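/- arXiv:2007.01014 — 4 statements merged into one kernel-verified Lean document; each statement's English description precedes it below -/
import Mathlib

section
/- Let E ⊆ Q be absorbing and let Σ be a nonempty finite type. Then there exists a finite word that is a witness to rt-inconsistency of E if, and only if, there exists a finite word σ such that the run of σ from q0 avoids E and step (δ(q0,σ)) a ∈ E for every letter a ∈ Σ. (This is the CTL characterization E[¬error U (¬error ∧ AX error)] of the existence of an rt-inconsistency witness.) -/
variable {Q A : Type*}

/-- `delta step q σ` is the last configuration of the run of the finite word `σ` from `q`. -/
def delta (step : Q → A → Q) (q : Q) (σ : List A) : Q := σ.foldl step q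

/-- The run of the finite word `σ` from `q` visits the set `E`. -/
def Visits (step : Q → A → Q) (q : Q) (σ : List A) (E : Set Q) : Prop :=
  ∃ n ≤ σ.length, delta step q (σ.take n) ∈ E

/-- The run of the finite word `σ` from `q` avoids the set `E`. -/
def Avoids (step : Q → A → Q) (q : Q) (σ : List A) (E : Set Q) : Prop :=
  ∀ n ≤ σ.length, delta step q (σ.take n) ∉ E

/-- The prefix of length `n` of the infinite trace `π`. -/
def prefixWord (π : ℕ → A) (n : ℕ) : List A := List.ofFn (fun i : Fin n => π i)

/-- The finite word `σ` fails `E`: its run from `q0` visits `E`. -/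
def Fails (step : Q → A → Q) (q0 : Q) (σ : List A) (E : Set Q) : Prop :=
  Visits step q0 σ E

/-- The infinite trace `π` fails `E`: some finite prefix of `π` fails `E`. -/
def InfFails (step : Q → A → Q) (q0 : Q) (π : ℕ → A) (E : Set Q) : Prop :=
  ∃ n : ℕ, Fails step q0 (prefixWord π n) E

/-- The infinite trace `π` extends the finite word `σ`. -/
def Extends (π : ℕ → A) (σ : List A) : Prop :=
  ∀ i : Fin σ.length, π i = σ.get i

/-- The finite word `σ` inevitably fails `E`: every infinite trace extending `σ` fails `E`. -/
def InevFails (step : Q → A → Q) (q0 : Q) (σ : List A) (E : Set Q) : Prop :=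
  ∀ π : ℕ → A, Extends π σ → InfFails step q0 π E

/-- `σ` is a witness to rt-inconsistency of `E`: it does not fail `E` but inevitably fails `E`. -/
def RtWitness (step : Q → A → Q) (q0 : Q) (σ : List A) (E : Set Q) : Prop :=
  ¬ Fails step q0 σ E ∧ InevFails step q0 σ E

/-- `E` is absorbing: once in `E`, every transition stays in `E`. -/
def Absorbing (step : Q → A → Q) (E : Set Q) : Prop :=
  ∀ q ∈ E, ∀ a : A, step q a ∈ E

section Aux

variable {Q A : Type*}

lemma delta_append (step : Q → A → Q) (q : Q) (σ τ : List A) :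
    delta step q (σ ++ τ) = delta step (delta step q σ) τ := by
  simp [delta, List.foldl_append]

lemma delta_singleton (step : Q → A → Q) (q : Q) (a : A) :
    delta step q [a] = step q a := rfl

open Classical in
noncomputable def pick [Nonempty A] (step : Q → A → Q) (E : Set Q) (q : Q) : A :=
  if h : ∃ a, step q a ∉ E then h.choose else Classical.arbitrary A

noncomputable def gpi [Nonempty A] (step : Q → A → Q) (q0 : Q) (E : Set Q) (σ : List A) :
    ℕ → A := fun n =>
  if h : n < σ.length then σ.get ⟨n, h⟩
  else pick step E (delta step q0 (List.ofFn (fun i : Fin n => gpi step q0 E σ i)))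
  decreasing_by exact i.2

lemma prefixWord_succ (π : ℕ → A) (n : ℕ) :
    prefixWord π (n + 1) = prefixWord π n ++ [π n] := by
  rw [prefixWord, List.ofFn_succ', List.concat_eq_append]
  rfl

lemma prefixWord_length (π : ℕ → A) (n : ℕ) : (prefixWord π n).length = n := by
  simp [prefixWord]

lemma prefixWord_take (π : ℕ → A) {m n : ℕ} (h : m ≤ n) :
    (prefixWord π n).take m = prefixWord π m := by
  induction n with
  | zero => simp_all [prefixWord]
  | succ k ih =>
    rcases Nat.lt_or_ge m (k + 1) with h' | h'
    · have hm : m ≤ k := by omega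
      have hlen : m ≤ (prefixWord π k).length := by rw [prefixWord_length]; exact hm
      rw [prefixWord_succ, List.take_append_of_le_length hlen, ih hm]
    · have : m = k + 1 := le_antisymm h h'
      subst this
      rw [List.take_of_length_le (by rw [prefixWord_length])]

lemma gpi_def [Nonempty A] (step : Q → A → Q) (q0 : Q) (E : Set Q) (σ : List A) (n : ℕ) :
    gpi step q0 E σ n =
      if h : n < σ.length then σ.get ⟨n, h⟩
      else pick step E (delta step q0 (prefixWord (gpi step q0 E σ) n)) := by
  rw [gpi]; rfl

lemma prefixWord_extends {π : ℕ → A} {σ : List A} (h : Extends π σ) :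
    prefixWord π σ.length = σ := by
  apply List.ext_get (by simp [prefixWord_length])
  intro i h1 h2
  simp only [prefixWord, List.get_ofFn]
  exact h ⟨i, h2⟩

lemma gpi_extends [Nonempty A] (step : Q → A → Q) (q0 : Q) (E : Set Q) (σ : List A) :
    Extends (gpi step q0 E σ) σ := by
  intro i
  rw [gpi_def, dif_pos i.2]

lemma gpi_prefix_of_le [Nonempty A] (step : Q → A → Q) (q0 : Q) (E : Set Q) (σ : List A)
    {m : ℕ} (h : m ≤ σ.length) : prefixWord (gpi step q0 E σ) m = σ.take m := by
  have hh := prefixWord_extends (gpi_extends step q0 E σ)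
  conv_rhs => rw [← hh]
  rw [prefixWord_take _ h]

end Aux

/-- CTL characterization of the existence of an rt-inconsistency witness:
for an absorbing error set `E`, a witness to rt-inconsistency exists iff there is a finite
word whose run from `q0` avoids `E` and from whose last configuration every letter leads
into `E`. -/
theorem stmt0 [Fintype A] [Nonempty A] (step : Q → A → Q) (q0 : Q) (E : Set Q)
    (hE : Absorbing step E) :
    (∃ σ : List A, RtWitness step q0 σ E) ↔
      (∃ σ : List A, Avoids step q0 σ E ∧ ∀ a : A, step (delta step q0 σ) a ∈ E) := by
  classical
  constructor
  · rintro ⟨σ, hF, hI⟩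
    set π := gpi step q0 E σ with hπ
    have hext : Extends π σ := gpi_extends step q0 E σ
    obtain ⟨n, k, hk, hkE⟩ := hI π hext
    have hkn : k ≤ n := by rwa [prefixWord_length] at hk
    rw [prefixWord_take π hkn] at hkE
    have hex : ∃ m, delta step q0 (prefixWord π m) ∈ E := ⟨k, hkE⟩
    have hmE : delta step q0 (prefixWord π (Nat.find hex)) ∈ E := Nat.find_spec hex
    have hmin : ∀ j < Nat.find hex, delta step q0 (prefixWord π j) ∉ E :=
      fun j hj => Nat.find_min hex hj
    have hσm : σ.length < Nat.find hex := by
      by_contra hle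
      push_neg at hle
      exact hF ⟨Nat.find hex, hle, by rwa [← gpi_prefix_of_le step q0 E σ hle]⟩
    obtain ⟨j, hj⟩ : ∃ j, Nat.find hex = j + 1 := ⟨Nat.find hex - 1, by omega⟩
    rw [hj] at hmE hmin hσm
    have hjσ : ¬ j < σ.length := by omega
    rw [prefixWord_succ, delta_append, delta_singleton] at hmE
    have hπj : π j = pick step E (delta step q0 (prefixWord π j)) := by
      rw [hπ, gpi_def, dif_neg hjσ]
    rw [hπj] at hmE
    refine ⟨prefixWord π j, ?_, ?_⟩
    · intro n hn
      rw [prefixWord_length] at hn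
      rw [prefixWord_take π hn]
      exact hmin n (by omega)
    · intro a
      by_contra ha
      have hne : ∃ b, step (delta step q0 (prefixWord π j)) b ∉ E := ⟨a, ha⟩
      rw [pick, dif_pos hne] at hmE
      exact hne.choose_spec hmE
  · rintro ⟨σ, hAv, hstep⟩
    refine ⟨σ, ?_, ?_⟩
    · rintro ⟨n, hn, hnE⟩
      exact hAv n hn hnE
    · intro π hext
      refine ⟨σ.length + 1, σ.length + 1, by rw [prefixWord_length], ?_⟩
      rw [List.take_of_length_le (by rw [prefixWord_length]), prefixWord_succ,
        delta_append, delta_singleton, prefixWord_extends hext]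
      exact hstep (π σ.length)
end

section
/- Let Σ be a nonempty finite type, E ⊆ Q, and q ∈ Q with q ∉ E. If every infinite trace π : ℕ → Σ is such that the run of π from q eventually visits E, then there exists a finite word τ such that the run of τ from q avoids E and step (δ(q,τ)) a ∈ E for every letter a ∈ Σ. -/
variable {Q A : Type*}

/-- if `q ∉ E` and every infinite trace from `q` eventually visits `E`,
then some finite word `τ` runs from `q` avoiding `E` and reaches a configuration all of
whose successors are in `E`. -/
theorem stmt1 [Fintype A] [Nonempty A] (step : Q → A → Q) (E : Set Q) (q : Q)
    (hq : q ∉ E)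
    (h : ∀ π : ℕ → A, ∃ n : ℕ, delta step q (prefixWord π n) ∈ E) :
    ∃ τ : List A, Avoids step q τ E ∧ ∀ a : A, step (delta step q τ) a ∈ E := by
  by_contra hcon
  push_neg at hcon
  -- hcon : for every avoiding τ there is a letter keeping us out of E
  choose! f hf using hcon
  -- iterated words
  let w : ℕ → List A := fun n => Nat.rec [] (fun _ τ => τ ++ [f τ]) n
  have hw0 : w 0 = [] := rfl
  have hws : ∀ n, w (n + 1) = w n ++ [f (w n)] := fun n => rfl
  have key : ∀ n, (w n).length = n ∧ Avoids step q (w n) E := by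
    intro n
    induction n with
    | zero =>
      refine ⟨rfl, ?_⟩
      intro m hm
      have : m = 0 := Nat.le_zero.mp hm
      subst this
      simpa [delta] using hq
    | succ n ih =>
      obtain ⟨hlen, havoid⟩ := ih
      have hfn : step (delta step q (w n)) (f (w n)) ∉ E := hf _ havoid
      constructor
      · simp [hws n, hlen]
      · intro m hm
        rw [hws n]
        rcases Nat.lt_or_ge m (n + 1) with hm' | hm'
        · have hmn : m ≤ n := Nat.lt_succ_iff.mp hm'
          rw [List.take_append_of_le_length (by omega)]
          exact havoid m (by omega)
        · have hmeq : m = n + 1 := by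
            rw [hws n] at hm; simp [hlen] at hm; omega
          subst hmeq
          rw [List.take_of_length_le (by simp [hlen])]
          simpa [delta, List.foldl_append] using hfn
  -- the infinite trace
  set π : ℕ → A := fun n => f (w n) with hπ
  have hpref : ∀ n, prefixWord π n = w n := by
    intro n
    induction n with
    | zero => rfl
    | succ n ih =>
      rw [hws n, ← ih]
      rw [prefixWord, List.ofFn_succ']
      simp only [prefixWord, List.concat_eq_append, Fin.coe_castSucc, Fin.val_last]
      have : (List.ofFn fun i : Fin n => π ↑i) = w n := ih
      rw [this]
  obtain ⟨n, hn⟩ := h π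
  rw [hpref n] at hn
  obtain ⟨hlen, havoid⟩ := key n
  exact havoid n (by omega) (by rwa [List.take_of_length_le (by omega)])
end

section
/- Let E1, E2, E' ⊆ Q be absorbing, let E_R ⊆ Q be a set with E' ∪ E1 ∪ E2 ⊆ E_R, let α, β > 0 and k ≤ α. Let π be an infinite trace, let σ be its prefix of length k, and let s = δ(q0,σ). Assume: (i) s satisfies (∃ a, step s a ∈ E1) and (∃ a, step s a ∈ E2); (ii) the conclusion of the (α,β)-bounded partial consistency check fails at depth k, i.e., every configuration t reachable from q0 by a word of length at most k satisfying (∃ a, step t a ∈ E1) and (∃ a, step t a ∈ E2) is such that every infinite trace's run from t visits E' ∪ E1 ∪ E2 within the first α+β−k steps; and (iii) σ does not fail E_R. Then σ is a witness to rt-inconsistency of E_R. -/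
variable {Q A : Type*}

/-- a counterexample to the `(α,β)`-bounded partial-consistency check that
does not fail the full error set `E_R` is a witness to rt-inconsistency of `E_R`. -/
theorem stmt12 [Fintype A] [Nonempty A] (step : Q → A → Q) (q0 : Q)
    (E1 E2 E' ER : Set Q)
    (h1 : Absorbing step E1) (h2 : Absorbing step E2) (h' : Absorbing step E')
    (hsub : E' ∪ E1 ∪ E2 ⊆ ER)
    (α β k : ℕ) (hα : 0 < α) (hβ : 0 < β) (hk : k ≤ α)
    (π : ℕ → A) (σ : List A) (hσ : σ = prefixWord π k)
    (s : Q) (hs : s = delta step q0 σ)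
    (hi1 : ∃ a : A, step s a ∈ E1) (hi2 : ∃ a : A, step s a ∈ E2)
    (hii : ∀ t : Q, (∃ τ : List A, τ.length ≤ k ∧ delta step q0 τ = t) →
      (∃ a : A, step t a ∈ E1) → (∃ a : A, step t a ∈ E2) →
      ∀ π' : ℕ → A, ∃ n ≤ α + β - k, delta step t (prefixWord π' n) ∈ E' ∪ E1 ∪ E2)
    (hiii : ¬ Fails step q0 σ ER) :
    RtWitness step q0 σ ER := by
  refine ⟨hiii, ?_⟩
  intro π' hext
  -- length of σ is k
  have hlen : σ.length = k := by simp [hσ, prefixWord]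
  -- prefix of π' of length k is σ
  have hpre : prefixWord π' k = σ := by
    apply List.ext_get (by simp [prefixWord, hlen])
    intro i h1 h2
    have : π' i = σ.get ⟨i, h2⟩ := hext ⟨i, h2⟩
    simpa [prefixWord] using this
  -- apply hii at t = s
  obtain ⟨n, -, hmem⟩ := hii s ⟨σ, by simp [hlen, hs]⟩ hi1 hi2 (fun i => π' (k + i))
  refine ⟨k + n, k + n, le_of_eq (by simp [prefixWord]), ?_⟩
  have hsplit : prefixWord π' (k + n) =
      prefixWord π' k ++ prefixWord (fun i => π' (k + i)) n := by
    simp only [prefixWord]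
    rw [List.ofFn_add]
    simp [Fin.castAdd, Fin.natAdd]
  have htake : (prefixWord π' (k + n)).take (k + n) = prefixWord π' (k + n) := by
    simp [prefixWord]
  rw [htake, hsplit, hpre]
  have : delta step q0 (σ ++ prefixWord (fun i => π' (k + i)) n)
      = delta step s (prefixWord (fun i => π' (k + i)) n) := by
    simp [delta, List.foldl_append, hs]
  rw [this]
  exact hsub hmem
end

section
/- Let E_S ⊆ Q be absorbing (the union of the error sets of a subset S of requirements) and let E_R ⊆ Q be a set with E_S ⊆ E_R (the union of the error sets of the full requirement set R). If σ is a finite word whose run from q0 avoids E_R and such that step (δ(q0,σ)) a ∈ E_S for every letter a ∈ Σ, then σ is a witness to rt-inconsistency of E_R. (Hence any trace returned by the incremental partial rt-consistency algorithm witnesses rt-inconsistency of R.) -/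
variable {Q A : Type*}

/-- if the run of `σ` from `q0` avoids `E_R ⊇ E_S` and every letter leads the
last configuration into the absorbing set `E_S`, then `σ` is a witness to rt-inconsistency
of `E_R`. -/
theorem stmt13 [Fintype A] [Nonempty A] (step : Q → A → Q) (q0 : Q) (ES ER : Set Q)
    (hS : Absorbing step ES) (hsub : ES ⊆ ER) (σ : List A)
    (hav : Avoids step q0 σ ER)
    (hnext : ∀ a : A, step (delta step q0 σ) a ∈ ES) :
    RtWitness step q0 σ ER := by
  constructor
  · rintro ⟨n, hn, hmem⟩
    exact hav n hn hmem
  · intro π hext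
    have hpre : prefixWord π σ.length = σ := by
      apply List.ext_get
      · simp [prefixWord]
      · intro i h1 h2
        simpa [prefixWord] using hext ⟨i, h2⟩
    refine ⟨σ.length + 1, σ.length + 1, le_of_eq (by simp [prefixWord]), ?_⟩
    have hsplit : prefixWord π (σ.length + 1) = σ ++ [π σ.length] := by
      rw [← hpre, prefixWord, List.ofFn_succ', List.concat_eq_append]
      simp [prefixWord]
    have hlen : (prefixWord π (σ.length + 1)).length = σ.length + 1 := by
      simp [prefixWord]
    rw [List.take_of_length_le (le_of_eq hlen), hsplit]
    have : delta step q0 (σ ++ [π σ.length]) = step (delta step q0 σ) (π σ.length) := by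
      simp [delta, List.foldl_append]
    rw [this]
    exact hsub (hnext _)
end
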